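/- arXiv:2109.08239 — 2 statements merged into one kernel-verified Lean document; each statement's English description precedes it below -/
import Mathlib

section
/- Let λ : Ω → (0,∞) and w : Ω → (0,∞) be continuous, with E(x,y) ⊆ Ω for all (x,y) ∈ Ω, and let f : Ω → ℝ be an arbitrary function. Suppose the persistence-surface map is continuous on one-point diagrams, i.e. for every (x,y) ∈ Ω and every ε > 0 there exists δ > 0 such that ‖(x',y') − (x,y)‖_∞ < δ implies ‖f(x,y)·χ_{E(x,y)} − f(x',y')·χ_{E(x',y')}‖_{L²(w dA)} < ε. Then f is continuous on Ω. -/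
open MeasureTheory Real

noncomputable section

/-- The open first quadrant. -/
def Omega : Set (ℝ × ℝ) := {p | 0 < p.1 ∧ 0 < p.2}

/-- The closed axis-aligned square centered at `p` with side length `l`. -/
def sqr (l : ℝ) (p : ℝ × ℝ) : Set (ℝ × ℝ) :=
  Set.Icc (p.1 - l / 2) (p.1 + l / 2) ×ˢ Set.Icc (p.2 - l / 2) (p.2 + l / 2)

/-- The square `E(p)` associated to a length function `lam`. -/
def sqE (lam : ℝ × ℝ → ℝ) (p : ℝ × ℝ) : Set (ℝ × ℝ) := sqr (lam p) p

/-- The persistence surface of the diagram `D`. -/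
def surf (f lam : ℝ × ℝ → ℝ) {N : ℕ} (D : Fin N → ℝ × ℝ) (z : ℝ × ℝ) : ℝ :=
  ∑ n, f (D n) * Set.indicator (sqE lam (D n)) 1 z

/-- The identification `ρ(D)` of a persistence diagram as a function. -/
def rho (lam : ℝ × ℝ → ℝ) {N : ℕ} (D : Fin N → ℝ × ℝ) (z : ℝ × ℝ) : ℝ :=
  ∑ n, Set.indicator (sqE lam (D n)) 1 z

/-- The `L²(w dA)` norm, the integral taken over `Omega`. -/
def l2norm (w g : ℝ × ℝ → ℝ) : ℝ :=
  Real.sqrt (∫ z in Omega, (g z) ^ 2 * w z)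

/-- The `p`-Wasserstein distance between two `N`-point diagrams (sup-norm ground metric). -/
def Wp (p : ℝ) {N : ℕ} (D D' : Fin N → ℝ × ℝ) : ℝ :=
  ⨅ σ : Equiv.Perm (Fin N), (∑ n, ‖D n - D' (σ n)‖ ^ p) ^ (1 / p)

/-- The `1/2`-Wasserstein distance (no outer power). -/
def Whalf {N : ℕ} (D D' : Fin N → ℝ × ℝ) : ℝ :=
  ⨅ σ : Equiv.Perm (Fin N), ∑ n, ‖D n - D' (σ n)‖ ^ ((1 : ℝ) / 2)

/-- The `1`-Wasserstein distance. -/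
def W1 {N : ℕ} (D D' : Fin N → ℝ × ℝ) : ℝ :=
  ⨅ σ : Equiv.Perm (Fin N), ∑ n, ‖D n - D' (σ n)‖

/-- The persistence image value `I_S(D) = ∫_S f̃ρ(D) w dA`. -/
def Ipix (f lam w : ℝ × ℝ → ℝ) {N : ℕ} (D : Fin N → ℝ × ℝ) (S : Set (ℝ × ℝ)) : ℝ :=
  ∫ z in S, surf f lam D z * w z

/-- `‖f‖_∞ = sup_Ω |f|`. -/
def supAbs (f : ℝ × ℝ → ℝ) : ℝ := ⨆ p : Omega, |f p.val|

/-- `‖λ‖_∞ = sup_Ω λ`. -/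
def supLam (lam : ℝ × ℝ → ℝ) : ℝ := ⨆ p : Omega, lam p.val

/-! Near `q`, the squares `E(q')` of all nearby `q'` contain a fixed closed ball `B` around `q`,
on which `f q · χ_{E(q)} - f q' · χ_{E(q')}` is the constant `f q - f q'`. Hence
`|f q - f q'| · (∫_B w)^{1/2}` is bounded by the `L²(w dA)` distance, which tends to `0`. -/

open MeasureTheory Metric Filter Topology Set

lemma isOpen_Omega : IsOpen Omega := isOpen_Ioi.prod isOpen_Ioi

lemma sqr_eq_closedBall (l : ℝ) (p : ℝ × ℝ) : sqr l p = closedBall p (l / 2) := by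
  rw [sqr, ← Real.closedBall_eq_Icc, ← Real.closedBall_eq_Icc, closedBall_prod_same]

lemma isCompact_sqE (lam : ℝ × ℝ → ℝ) (p : ℝ × ℝ) : IsCompact (sqE lam p) := by
  rw [sqE, sqr_eq_closedBall]; exact isCompact_closedBall p _

lemma measurableSet_sqE (lam : ℝ × ℝ → ℝ) (p : ℝ × ℝ) : MeasurableSet (sqE lam p) :=
  (isCompact_sqE lam p).measurableSet

lemma l2norm_nonneg (w g : ℝ × ℝ → ℝ) : 0 ≤ l2norm w g := Real.sqrt_nonneg _

lemma abs_mul_indicator_one_le {α : Type*} (a : ℝ) (s : Set α) (z : α) :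
    |a * s.indicator 1 z| ≤ |a| := by
  by_cases hz : z ∈ s <;> simp [hz]

section

variable {α : Type*} [MeasurableSpace α] {μ : Measure α} {w : α → ℝ} {s t : Set α}

lemma integrableOn_sq_sub_indicator_mul (hs : MeasurableSet s) (ht : MeasurableSet t)
    (hw : IntegrableOn w (s ∪ t) μ) (a b : ℝ) :
    IntegrableOn (fun z => (a * s.indicator 1 z - b * t.indicator 1 z) ^ 2 * w z) (s ∪ t) μ := by
  refine hw.bdd_mul (c := (|a| + |b|) ^ 2) ?_ (Eventually.of_forall fun z => ?_)
  · exact (((measurable_const.indicator hs).const_mul a).sub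
      ((measurable_const.indicator ht).const_mul b)).pow_const 2 |>.aestronglyMeasurable
  · rw [Real.norm_eq_abs, abs_pow]
    gcongr
    exact (abs_sub _ _).trans (add_le_add (abs_mul_indicator_one_le a s z)
      (abs_mul_indicator_one_le b t z))

lemma setIntegral_pos_of_forall_pos (hs : MeasurableSet s) (hμs : 0 < μ s)
    (hw : IntegrableOn w s μ) (hpos : ∀ z ∈ s, 0 < w z) : 0 < ∫ z in s, w z ∂μ := by
  rw [setIntegral_pos_iff_support_of_nonneg_ae
    (ae_restrict_of_forall_mem hs fun z hz => (hpos z hz).le) hw,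
    inter_eq_right.2 fun z hz => Function.mem_support.2 (hpos z hz).ne']
  exact hμs

lemma abs_sub_mul_sqrt_setIntegral_le {U B : Set α} (hU : MeasurableSet U)
    (hs : MeasurableSet s) (ht : MeasurableSet t) (hstU : s ∪ t ⊆ U)
    (hw : IntegrableOn w (s ∪ t) μ) (hw0 : ∀ z ∈ s ∪ t, 0 ≤ w z) (hBm : MeasurableSet B)
    (hB : B ⊆ s ∩ t) (a b : ℝ) :
    |a - b| * √(∫ z in B, w z ∂μ) ≤
      √(∫ z in U, (a * s.indicator 1 z - b * t.indicator 1 z) ^ 2 * w z ∂μ) := by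
  have h_on_B : ∫ z in B, (a * s.indicator 1 z - b * t.indicator 1 z) ^ 2 * w z ∂μ
      = (a - b) ^ 2 * ∫ z in B, w z ∂μ := by
    rw [← integral_const_mul]
    refine setIntegral_congr_fun hBm fun z hz => ?_
    simp [(hB hz).1, (hB hz).2]
  have h_off : ∫ z in U, (a * s.indicator 1 z - b * t.indicator 1 z) ^ 2 * w z ∂μ
      = ∫ z in s ∪ t, (a * s.indicator 1 z - b * t.indicator 1 z) ^ 2 * w z ∂μ := by
    refine setIntegral_eq_of_subset_of_forall_sdiff_eq_zero hU hstU fun z hz => ?_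
    have hz' : z ∉ s ∧ z ∉ t := by simpa [not_or] using hz.2
    simp [hz'.1, hz'.2]
  have h_mono : (a - b) ^ 2 * ∫ z in B, w z ∂μ
      ≤ ∫ z in s ∪ t, (a * s.indicator 1 z - b * t.indicator 1 z) ^ 2 * w z ∂μ := by
    rw [← h_on_B]
    refine setIntegral_mono_set (integrableOn_sq_sub_indicator_mul hs ht hw a b) ?_
      (hB.trans (inter_subset_left.trans subset_union_left)).eventuallyLE
    exact ae_restrict_of_forall_mem (hs.union ht) fun z hz => mul_nonneg (sq_nonneg _) (hw0 z hz)
  calc |a - b| * √(∫ z in B, w z ∂μ) = √((a - b) ^ 2 * ∫ z in B, w z ∂μ) := by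
        rw [Real.sqrt_mul (sq_nonneg _), Real.sqrt_sq_eq_abs]
    _ ≤ _ := by rw [h_off]; exact Real.sqrt_le_sqrt h_mono

end

lemma eventually_closedBall_subset_sqE {lam : ℝ × ℝ → ℝ} {s : Set (ℝ × ℝ)} {q : ℝ × ℝ}
    (hlam : ContinuousWithinAt lam s q) (hq : 0 < lam q) :
    ∀ᶠ q' in 𝓝[s] q, closedBall q (lam q / 8) ⊆ sqE lam q' := by
  filter_upwards [hlam (lt_mem_nhds (half_lt_self hq)),
    nhdsWithin_le_nhds (ball_mem_nhds q (by positivity : 0 < lam q / 8))] with q' hlam' hq'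
  have hlam' : lam q / 2 < lam q' := hlam'
  rw [mem_ball, dist_comm] at hq'
  rw [sqE, sqr_eq_closedBall]
  exact closedBall_subset_closedBall' (by linarith)

lemma abs_sub_mul_sqrt_le_l2norm {lam w : ℝ × ℝ → ℝ} (hwc : ContinuousOn w Omega)
    (hw0 : ∀ q ∈ Omega, 0 < w q) {p p' : ℝ × ℝ} (hp : sqE lam p ⊆ Omega)
    (hp' : sqE lam p' ⊆ Omega) {B : Set (ℝ × ℝ)} (hBm : MeasurableSet B)
    (hB : B ⊆ sqE lam p ∩ sqE lam p') (a b : ℝ) :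
    |a - b| * √(∫ z in B, w z) ≤
      l2norm w (fun z => a * (sqE lam p).indicator 1 z - b * (sqE lam p').indicator 1 z) := by
  have hK : sqE lam p ∪ sqE lam p' ⊆ Omega := union_subset hp hp'
  exact abs_sub_mul_sqrt_setIntegral_le isOpen_Omega.measurableSet (measurableSet_sqE lam p)
    (measurableSet_sqE lam p') hK
    ((hwc.mono hK).integrableOn_compact ((isCompact_sqE lam p).union (isCompact_sqE lam p')))
    (fun z hz => (hw0 z (hK hz)).le) hBm hB a b

/-- if the persistence-surface map is continuous on one-point diagrams,
then `f` is continuous on `Omega`. -/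
theorem stmt5 (f lam w : ℝ × ℝ → ℝ)
    (hlamc : ContinuousOn lam Omega) (hwc : ContinuousOn w Omega)
    (hlam0 : ∀ q ∈ Omega, 0 < lam q) (hw0 : ∀ q ∈ Omega, 0 < w q)
    (hE : ∀ q ∈ Omega, sqE lam q ⊆ Omega)
    (hcont : ∀ q ∈ Omega, ∀ ε > 0, ∃ δ > 0, ∀ q' ∈ Omega, ‖q' - q‖ < δ →
      l2norm w (fun z => f q * Set.indicator (sqE lam q) 1 z
        - f q' * Set.indicator (sqE lam q') 1 z) < ε) :
    ContinuousOn f Omega := by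
  intro q hq
  set B := closedBall q (lam q / 8)
  have hB_near := eventually_closedBall_subset_sqE (hlamc q hq) (hlam0 q hq)
  have hBq : B ⊆ sqE lam q := hB_near.self_of_nhdsWithin hq
  have hBΩ : B ⊆ Omega := hBq.trans (hE q hq)
  have hc : 0 < ∫ z in B, w z :=
    setIntegral_pos_of_forall_pos measurableSet_closedBall
      (measure_closedBall_pos _ q (by linarith [hlam0 q hq]))
      ((hwc.mono hBΩ).integrableOn_compact (isCompact_closedBall q _)) fun z hz => hw0 z (hBΩ hz)
  have hl2 : Tendsto (fun q' => l2norm w (fun z => f q * Set.indicator (sqE lam q) 1 z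
      - f q' * Set.indicator (sqE lam q') 1 z)) (𝓝[Omega] q) (𝓝 0) := by
    refine Metric.tendsto_nhdsWithin_nhds.2 fun ε hε => ?_
    obtain ⟨δ, hδ, h⟩ := hcont q hq ε hε
    refine ⟨δ, hδ, fun q' hq' hd => ?_⟩
    rw [Real.dist_0_eq_abs, abs_of_nonneg (l2norm_nonneg _ _)]
    exact h q' hq' (by rwa [← dist_eq_norm])
  refine tendsto_iff_dist_tendsto_zero.2 (squeeze_zero' (Eventually.of_forall fun _ => dist_nonneg)
    ?_ (by simpa using hl2.div_const √(∫ z in B, w z)))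
  filter_upwards [hB_near, self_mem_nhdsWithin] with q' hBq' hq'
  rw [le_div_iff₀ (Real.sqrt_pos.2 hc), Real.dist_eq, abs_sub_comm]
  exact abs_sub_mul_sqrt_le_l2norm hwc hw0 (hE q hq) (hE q' hq') measurableSet_closedBall
    (subset_inter hBq hBq') _ _
end
end

section
/- Let λ : Ω → (0,∞) and w : Ω → (0,∞), with E(x,y) ⊆ Ω for all (x,y) ∈ Ω, and let M > 0 satisfy: |λ(x,y) − λ(x',y')| ≤ M·‖(x,y) − (x',y')‖_∞ for all (x,y),(x',y') ∈ Ω, λ(x,y) ≤ M for all (x,y) ∈ Ω, and w(x,y) ≤ M for all (x,y) ∈ Ω. Then for every N ≥ 1 and all D = ((x₁,y₁),…,(x_N,y_N)) and D' = ((x'₁,y'₁),…,(x'_N,y'_N)) in Ω^N, ‖ρ(D) − ρ(D')‖_{L²(w dA)} ≤ √(max{2M²(M+2), 4M}) · W_{1/2}(D,D'), where W_{1/2}(D,D') is the infimum over all permutations σ of {1,…,N} of Σ_{n=1}^N ‖(x_n,y_n) − (x'_{σ(n)},y'_{σ(n)})‖_∞^{1/2}. -/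
/-!
Match the points of `D` and `D'` by a permutation `σ` attaining `W_{1/2}`. Then `ρ(D) - ρ(D')` is
the sum of the differences `χ_{E(Dₙ)} - χ_{E(D'_{σ n})}`, and by Minkowski's inequality and
`w ≤ M` it suffices to bound `‖χ_A - χ_B‖₂² = |A ∆ B|` for each pair. Two squares of sides `l`, `l'`
whose centres are `δ` apart in the sup norm overlap in a rectangle with both sides at least
`c = (min l l' - δ)⁺`, so `|A ∆ B| ≤ l² + l'² - 2c²`, and `|l - l'| ≤ Mδ`, `l, l' ≤ M` bound this
by `2M(M+2)δ`.
-/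

open MeasureTheory Real

noncomputable section

open Set
open scoped ENNReal symmDiff

lemma isCompact_sqr (l : ℝ) (p : ℝ × ℝ) : IsCompact (sqr l p) :=
  isCompact_Icc.prod isCompact_Icc

lemma measurableSet_sqr (l : ℝ) (p : ℝ × ℝ) : MeasurableSet (sqr l p) :=
  measurableSet_Icc.prod measurableSet_Icc

lemma volume_sqr_ne_top (l : ℝ) (p : ℝ × ℝ) : volume (sqr l p) ≠ ∞ :=
  (isCompact_sqr l p).measure_lt_top.ne

lemma volume_real_sqr {l : ℝ} (hl : 0 ≤ l) (p : ℝ × ℝ) : volume.real (sqr l p) = l ^ 2 := by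
  rw [sqr, Measure.volume_eq_prod, measureReal_prod_prod, Real.volume_real_Icc_of_le (by linarith),
    Real.volume_real_Icc_of_le (by linarith)]
  ring

lemma min_sub_abs_le_volume_real_Icc_inter_Icc (x x' l l' : ℝ) :
    min l l' - |x - x'| ≤
      volume.real (Icc (x - l / 2) (x + l / 2) ∩ Icc (x' - l' / 2) (x' + l' / 2)) := by
  rw [Icc_inter_Icc, Real.volume_real_Icc]
  refine le_max_of_le_left ?_
  simp only [min_def, max_def]
  split_ifs <;> linarith [le_abs_self (x - x'), neg_abs_le (x - x')]

lemma sq_le_volume_real_sqr_inter_sqr (l l' : ℝ) (p p' : ℝ × ℝ) :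
    max (min l l' - ‖p - p'‖) 0 ^ 2 ≤ volume.real (sqr l p ∩ sqr l' p') := by
  have side : ∀ x x' : ℝ, |x - x'| ≤ ‖p - p'‖ →
      max (min l l' - ‖p - p'‖) 0 ≤
        volume.real (Icc (x - l / 2) (x + l / 2) ∩ Icc (x' - l' / 2) (x' + l' / 2)) :=
    fun x x' hx => max_le
      ((sub_le_sub_left hx _).trans (min_sub_abs_le_volume_real_Icc_inter_Icc x x' l l'))
      measureReal_nonneg
  rw [sqr, sqr, prod_inter_prod, Measure.volume_eq_prod, measureReal_prod_prod, sq]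
  exact mul_le_mul (side _ _ (norm_fst_le (p - p'))) (side _ _ (norm_snd_le (p - p')))
    (le_max_right _ _) measureReal_nonneg

lemma sq_add_sq_sub_two_mul_sq_le {l l' δ M : ℝ} (hl : 0 ≤ l) (hl' : 0 ≤ l') (hlM : l ≤ M)
    (hl'M : l' ≤ M) (hδ : 0 ≤ δ) (hll' : |l - l'| ≤ M * δ) :
    l ^ 2 + l' ^ 2 - 2 * max (min l l' - δ) 0 ^ 2 ≤ 2 * M * (M + 2) * δ := by
  set c := max (min l l' - δ) 0
  have hsum : l ^ 2 + l' ^ 2 = min l l' ^ 2 + max l l' ^ 2 := by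
    rcases le_total l l' with h | h <;> simp [h, add_comm]
  have hc : min l l' - δ ≤ c := le_max_left _ _
  have hcm : c ≤ min l l' := max_le (by linarith) (le_min hl hl')
  have hc0 : 0 ≤ c := le_max_right _ _
  have hM : 0 ≤ M := hl.trans hlM
  have hmax : (max l l' - min l l') * (max l l' + min l l') ≤ M * δ * (2 * M) :=
    mul_le_mul (by rwa [max_sub_min_eq_abs, abs_sub_comm])
      (by linarith [max_le hlM hl'M, min_le_left l l'])
      (by linarith [le_max_left l l', min_le_left l l']) (mul_nonneg hM hδ)
  have hmin : (min l l' - c) * (min l l' + c) ≤ δ * (2 * M) :=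
    mul_le_mul (by linarith) (by linarith [min_le_left l l']) (by linarith) hδ
  linarith

lemma volume_real_sqr_symmDiff_sqr_le {l l' M : ℝ} {p p' : ℝ × ℝ} (hl : 0 ≤ l) (hl' : 0 ≤ l')
    (hlM : l ≤ M) (hl'M : l' ≤ M) (hll' : |l - l'| ≤ M * ‖p - p'‖) :
    volume.real (sqr l p ∆ sqr l' p') ≤ 2 * M * (M + 2) * ‖p - p'‖ := by
  have h := measureReal_sdiff_add_inter (measurableSet_sqr l' p') (volume_sqr_ne_top l p)
  have h' := measureReal_sdiff_add_inter (measurableSet_sqr l p) (volume_sqr_ne_top l' p')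
  rw [volume_real_sqr hl] at h
  rw [inter_comm, volume_real_sqr hl'] at h'
  rw [measureReal_symmDiff_eq (measurableSet_sqr l p) (measurableSet_sqr l' p')
    (volume_sqr_ne_top l p) (volume_sqr_ne_top l' p')]
  linarith [sq_le_volume_real_sqr_inter_sqr l l' p p',
    sq_add_sq_sub_two_mul_sq_le hl hl' hlM hl'M (norm_nonneg _) hll']

lemma eLpNorm_indicator_sqr_sub_indicator_sqr_le {l l' M : ℝ} {p p' : ℝ × ℝ} (hl : 0 ≤ l)
    (hl' : 0 ≤ l') (hlM : l ≤ M) (hl'M : l' ≤ M) (hll' : |l - l'| ≤ M * ‖p - p'‖) :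
    eLpNorm ((sqr l p).indicator 1 - (sqr l' p').indicator (1 : ℝ × ℝ → ℝ)) 2 volume ≤
      ENNReal.ofReal (√(2 * M * (M + 2)) * ‖p - p'‖ ^ (1 / 2 : ℝ)) := by
  have hM : 0 ≤ M := hl.trans hlM
  have hvol : volume (sqr l p ∆ sqr l' p') ≤ ENNReal.ofReal (2 * M * (M + 2) * ‖p - p'‖) := by
    rw [← ofReal_measureReal (measure_symmDiff_ne_top (volume_sqr_ne_top l p)
      (volume_sqr_ne_top l' p'))]
    exact ENNReal.ofReal_le_ofReal (volume_real_sqr_symmDiff_sqr_le hl hl' hlM hl'M hll')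
  rw [eLpNorm_indicator_sub_indicator, Pi.one_def,
    eLpNorm_indicator_const ((measurableSet_sqr l p).symmDiff (measurableSet_sqr l' p'))
      two_ne_zero ENNReal.ofNat_ne_top, enorm_one, one_mul, Real.sqrt_eq_rpow,
    ← Real.mul_rpow (by positivity) (norm_nonneg _),
    ← ENNReal.ofReal_rpow_of_nonneg (by positivity) (by norm_num)]
  exact ENNReal.rpow_le_rpow (by simpa using hvol) (by norm_num)

lemma measurableSet_Omega : MeasurableSet Omega :=
  (measurableSet_lt measurable_const measurable_fst).inter
    (measurableSet_lt measurable_const measurable_snd)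

lemma l2norm_le_sqrt_mul {w g : ℝ × ℝ → ℝ} {M K : ℝ} (hM : 0 ≤ M) (hw : ∀ z ∈ Omega, w z ≤ M)
    (hK : 0 ≤ K) (hg : AEStronglyMeasurable g volume)
    (hgK : eLpNorm g 2 volume ≤ ENNReal.ofReal K) :
    l2norm w g ≤ √M * K := by
  have hmem : MemLp g 2 volume := ⟨hg, hgK.trans_lt ENNReal.ofReal_lt_top⟩
  have hint : Integrable (fun z => g z ^ 2) volume := hmem.integrable_sq
  have hL2 : ∫ z, g z ^ 2 ≤ K ^ 2 := by
    rw [hmem.eLpNorm_eq_integral_rpow_norm two_ne_zero ENNReal.ofNat_ne_top,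
      ENNReal.ofReal_le_ofReal_iff hK] at hgK
    simp only [ENNReal.toReal_ofNat, Real.rpow_two, Real.norm_eq_abs, sq_abs] at hgK
    rwa [Real.rpow_inv_le_iff_of_pos (integral_nonneg fun z => sq_nonneg _) hK two_pos,
      Real.rpow_two] at hgK
  calc l2norm w g = √(∫ z in Omega, g z ^ 2 * w z) := rfl
    _ ≤ √(M * ∫ z, g z ^ 2) := by
      gcongr
      by_cases hgw : IntegrableOn (fun z => g z ^ 2 * w z) Omega
      · calc ∫ z in Omega, g z ^ 2 * w z ≤ ∫ z in Omega, M * g z ^ 2 :=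
              setIntegral_mono_on hgw (hint.const_mul M).integrableOn measurableSet_Omega
                fun z hz => by nlinarith [hw z hz, sq_nonneg (g z)]
          _ ≤ M * ∫ z, g z ^ 2 := by
            rw [integral_const_mul]
            exact mul_le_mul_of_nonneg_left
              (setIntegral_le_integral hint (ae_of_all _ fun z => sq_nonneg _)) hM
      · rw [integral_undef hgw]
        exact mul_nonneg hM (integral_nonneg fun z => sq_nonneg _)
    _ ≤ √(M * K ^ 2) := by gcongr
    _ = √M * K := by rw [Real.sqrt_mul' _ (sq_nonneg K), Real.sqrt_sq hK]

lemma rho_sub_rho_eq_sum (lam : ℝ × ℝ → ℝ) {N : ℕ} (D D' : Fin N → ℝ × ℝ)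
    (σ : Equiv.Perm (Fin N)) :
    (fun z => rho lam D z - rho lam D' z) =
      ∑ n, ((sqE lam (D n)).indicator 1 - (sqE lam (D' (σ n))).indicator 1) := by
  funext z
  simp only [rho, Finset.sum_apply, Pi.sub_apply, Finset.sum_sub_distrib]
  rw [Equiv.sum_comp σ (fun n => (sqE lam (D' n)).indicator 1 z)]

theorem stmt6_general (lam w : ℝ × ℝ → ℝ) (M : ℝ) (hM : 0 < M)
    (hlam0 : ∀ q ∈ Omega, 0 < lam q)
    (hlip : ∀ q ∈ Omega, ∀ q' ∈ Omega, |lam q - lam q'| ≤ M * ‖q - q'‖)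
    (hlamb : ∀ q ∈ Omega, lam q ≤ M) (hwb : ∀ q ∈ Omega, w q ≤ M)
    (N : ℕ)
    (D D' : Fin N → ℝ × ℝ) (hD : ∀ n, D n ∈ Omega) (hD' : ∀ n, D' n ∈ Omega) :
    l2norm w (fun z => rho lam D z - rho lam D' z) ≤
      Real.sqrt (max (2 * M ^ 2 * (M + 2)) (4 * M)) * Whalf D D' := by
  obtain ⟨σ, hσ⟩ := exists_eq_ciInf_of_finite
    (f := fun σ : Equiv.Perm (Fin N) => ∑ n, ‖D n - D' (σ n)‖ ^ ((1 : ℝ) / 2))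
  rw [Whalf, ← hσ, rho_sub_rho_eq_sum lam D D' σ]
  set S := ∑ n, ‖D n - D' (σ n)‖ ^ ((1 : ℝ) / 2)
  set f : Fin N → ℝ × ℝ → ℝ :=
    fun n => (sqE lam (D n)).indicator 1 - (sqE lam (D' (σ n))).indicator 1
  have hf : ∀ n, AEStronglyMeasurable (f n) volume := fun n =>
    ((measurable_const.indicator (measurableSet_sqr _ _)).sub
      (measurable_const.indicator (measurableSet_sqr _ _))).aestronglyMeasurable
  have hL2 : eLpNorm (∑ n, f n) 2 volume ≤ ENNReal.ofReal (√(2 * M * (M + 2)) * S) := by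
    rw [Finset.mul_sum, ENNReal.ofReal_sum_of_nonneg fun n _ => by positivity]
    refine (eLpNorm_sum_le (fun n _ => hf n) one_le_two).trans (Finset.sum_le_sum fun n _ => ?_)
    exact eLpNorm_indicator_sqr_sub_indicator_sqr_le (hlam0 _ (hD n)).le
      (hlam0 _ (hD' (σ n))).le (hlamb _ (hD n)) (hlamb _ (hD' (σ n)))
      (hlip _ (hD n) _ (hD' (σ n)))
  calc _ ≤ √M * (√(2 * M * (M + 2)) * S) :=
        l2norm_le_sqrt_mul hM.le hwb (by positivity)
          (Finset.aestronglyMeasurable_sum _ fun n _ => hf n) hL2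
    _ = √(2 * M ^ 2 * (M + 2)) * S := by
        rw [← mul_assoc, ← Real.sqrt_mul hM.le]
        ring_nf
    _ ≤ √(max (2 * M ^ 2 * (M + 2)) (4 * M)) * S := by
        gcongr
        exact le_max_left _ _

/-- stability of `ρ` with respect to the `1/2`-Wasserstein distance. -/
theorem stmt6 (lam w : ℝ × ℝ → ℝ) (M : ℝ) (hM : 0 < M)
    (hlam0 : ∀ q ∈ Omega, 0 < lam q) (hw0 : ∀ q ∈ Omega, 0 < w q)
    (hE : ∀ q ∈ Omega, sqE lam q ⊆ Omega)
    (hlip : ∀ q ∈ Omega, ∀ q' ∈ Omega, |lam q - lam q'| ≤ M * ‖q - q'‖)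
    (hlamb : ∀ q ∈ Omega, lam q ≤ M) (hwb : ∀ q ∈ Omega, w q ≤ M)
    (N : ℕ) (hN : 1 ≤ N)
    (D D' : Fin N → ℝ × ℝ) (hD : ∀ n, D n ∈ Omega) (hD' : ∀ n, D' n ∈ Omega) :
    l2norm w (fun z => rho lam D z - rho lam D' z) ≤
      Real.sqrt (max (2 * M ^ 2 * (M + 2)) (4 * M)) * Whalf D D' :=
  stmt6_general lam w M hM hlam0 hlip hlamb hwb N D D' hD hD'
end
end
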